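/- Fix r ≥ 1 and a finite multiset {i_1, ..., i_l} of indices in {1, ..., r}. The set of tuples d = (d_1, ..., d_r) ∈ (ℤ_{≥0})^r satisfying Σ_{k=1}^{l} d_{i_k} - Σ_{j=1}^{r} d_j - Σ_{i=1}^{r+1} (d_i - d_{i-1})²/2 ≥ 0 (with d_0 = d_{r+1} = 0) is finite. -/

import Mathlib

/-!
If `M = d_{j₀}` is the largest coordinate, the linear part of the functional is at most
`l M`, so the quadratic part `Q = ∑ (d_i - d_{i-1})²` is at most `2 l M`. On the other hand
`M` is the telescoping sum of the increments `d_i - d_{i-1}` for `i ≤ j₀ + 1 ≤ r + 1`, so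
Cauchy–Schwarz gives `M² ≤ (r + 1) Q`. Hence `M ≤ 2 l (r + 1)`, and the superlevel set lies
in a box.
-/

open Finset

/-- Extend a tuple `d ∈ (ℤ_{≥0})^r` to indices `0, 1, ..., r+1` (valued in `ℚ`),
with the conventions `d_0 = d_{r+1} = 0`. -/
def extQ (r : ℕ) (d : Fin r → ℕ) : ℕ → ℚ :=
  fun i => if h : 1 ≤ i ∧ i ≤ r then (d ⟨i - 1, by omega⟩ : ℚ) else 0

theorem sum_Icc_one_eq_sum_range {M : Type*} [AddCommMonoid M] (g : ℕ → M) (n : ℕ) :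
    ∑ i ∈ Icc 1 n, g i = ∑ i ∈ range n, g (i + 1) := by
  rw [range_eq_Ico, sum_Ico_add' g, zero_add, Ico_add_one_right_eq_Icc]

theorem sq_le_mul_sum_sq_sub {K : Type*} [Field K] [LinearOrder K] [IsStrictOrderedRing K]
    (f : ℕ → K) (hf : f 0 = 0) (n : ℕ) :
    f n ^ 2 ≤ n * ∑ i ∈ Icc 1 n, (f i - f (i - 1)) ^ 2 := by
  have htelescope : ∑ i ∈ Icc 1 n, (f i - f (i - 1)) = f n := by
    simp only [sum_Icc_one_eq_sum_range, Nat.add_sub_cancel]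
    rw [sum_range_sub, hf, sub_zero]
  calc f n ^ 2 = (∑ i ∈ Icc 1 n, (f i - f (i - 1))) ^ 2 := by rw [htelescope]
    _ ≤ n * ∑ i ∈ Icc 1 n, (f i - f (i - 1)) ^ 2 := by
      simpa using sq_sum_le_card_mul_sum_sq (s := Icc 1 n) (f := fun i => f i - f (i - 1))

section extQ

variable {r : ℕ} (d : Fin r → ℕ)

theorem extQ_zero : extQ r d 0 = 0 := by
  simp [extQ]

theorem extQ_nonneg (i : ℕ) : 0 ≤ extQ r d i := by
  unfold extQ; split <;> positivity

theorem extQ_succ (j : Fin r) : extQ r d ((j : ℕ) + 1) = d j := by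
  simp [extQ, Nat.succ_le_of_lt j.isLt]

theorem extQ_le {D : ℕ} (hD : ∀ j, d j ≤ D) (i : ℕ) : extQ r d i ≤ D := by
  unfold extQ; split
  · exact_mod_cast hD _
  · positivity

theorem sq_le_mul_sum_sq_sub_extQ (j : Fin r) :
    (d j : ℚ) ^ 2 ≤ (r + 1) * ∑ i ∈ Icc 1 (r + 1), (extQ r d i - extQ r d (i - 1)) ^ 2 := by
  have hj : (j : ℕ) + 1 ≤ r + 1 := by omega
  calc (d j : ℚ) ^ 2 = extQ r d ((j : ℕ) + 1) ^ 2 := by rw [extQ_succ]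
    _ ≤ (((j : ℕ) + 1 : ℕ) : ℚ) *
          ∑ i ∈ Icc 1 ((j : ℕ) + 1), (extQ r d i - extQ r d (i - 1)) ^ 2 :=
      sq_le_mul_sum_sq_sub _ (extQ_zero d) _
    _ ≤ (r + 1) * ∑ i ∈ Icc 1 (r + 1), (extQ r d i - extQ r d (i - 1)) ^ 2 := by
      gcongr
      · exact_mod_cast hj

theorem apply_le_of_superlevel {l : ℕ} (ι : Fin l → ℕ)
    (hd : 0 ≤ (∑ k : Fin l, extQ r d (ι k)) - (∑ j ∈ Icc 1 r, extQ r d j)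
      - (∑ i ∈ Icc 1 (r + 1), (extQ r d i - extQ r d (i - 1)) ^ 2) / 2)
    (j : Fin r) : d j ≤ 2 * l * (r + 1) := by
  obtain ⟨j₀, -, hj₀⟩ := exists_max_image univ d ⟨j, mem_univ j⟩
  have hle : ∀ i, d i ≤ d j₀ := fun i => hj₀ i (mem_univ i)
  set M : ℚ := (d j₀ : ℚ)
  set Q := ∑ i ∈ Icc 1 (r + 1), (extQ r d i - extQ r d (i - 1)) ^ 2
  have hlinear : ∑ k : Fin l, extQ r d (ι k) ≤ l * M := by
    simpa using sum_le_sum fun k (_ : k ∈ univ) => extQ_le d hle (ι k)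
  have hQ : Q ≤ 2 * l * M := by
    linarith [sum_nonneg fun i (_ : i ∈ Icc 1 r) => extQ_nonneg d i]
  have hM : M ≤ 2 * l * (r + 1) := by
    have hsq : M ^ 2 ≤ (r + 1) * Q := sq_le_mul_sum_sq_sub_extQ d j₀
    have hMM : M * M ≤ 2 * l * (r + 1) * M := by
      nlinarith [mul_le_mul_of_nonneg_left hQ (by positivity : (0 : ℚ) ≤ r + 1)]
    by_contra! hlt
    have hMpos : 0 < M := hlt.trans_le' (by positivity)
    linarith [mul_lt_mul_of_pos_right hlt hMpos]
  exact_mod_cast (Nat.cast_le.mpr (hle j)).trans hM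

end extQ

theorem finiteness_of_superlevel_lattice_points_general (r l : ℕ)
    (ι : Fin l → ℕ) :
    {d : Fin r → ℕ |
      0 ≤ (∑ k : Fin l, extQ r d (ι k)) - (∑ j ∈ Finset.Icc 1 r, extQ r d j)
        - (∑ i ∈ Finset.Icc 1 (r + 1), (extQ r d i - extQ r d (i - 1)) ^ 2) / 2}.Finite :=
  (Set.finite_Icc 0 fun _ => 2 * l * (r + 1)).subset
    fun d hd => ⟨fun _ => Nat.zero_le _, apply_le_of_superlevel d ι hd⟩

/-- Fix `r ≥ 1` and a finite multiset `{i_1, ..., i_l}` of indices in `{1, ..., r}`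
(modeled as a function `ι : Fin l → ℕ` with values in `{1,...,r}`).  The set of tuples
`d ∈ (ℤ_{≥0})^r` satisfying
`∑_{k=1}^l d_{i_k} - ∑_{j=1}^r d_j - ∑_{i=1}^{r+1} (d_i - d_{i-1})²/2 ≥ 0`
(with `d_0 = d_{r+1} = 0`) is finite. -/
theorem finiteness_of_superlevel_lattice_points (r l : ℕ) (hr : 1 ≤ r)
    (ι : Fin l → ℕ) (hι : ∀ k, ι k ∈ Finset.Icc 1 r) :
    {d : Fin r → ℕ |
      0 ≤ (∑ k : Fin l, extQ r d (ι k)) - (∑ j ∈ Finset.Icc 1 r, extQ r d j)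
        - (∑ i ∈ Finset.Icc 1 (r + 1), (extQ r d i - extQ r d (i - 1)) ^ 2) / 2}.Finite :=
  finiteness_of_superlevel_lattice_points_general r l ι
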